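/- Let n ≥ 2 and d ≥ 1. There exists a constant ξ_1 = ξ_1(n,d) > 0, depending only on n and d, with the following property: let Z ⊂ B̂^n, let z_0 ∈ S^{n-1}, and let ε, κ > 0 satisfy ε ≤ 1/(10√n) and κ > 10√n·ε. If M(ε,Z) ≥ ξ_1 · κ · (1/ε)^n, then there exist d+1 distinct points z_1, …, z_{d+1} ∈ Z and a straight line ℓ in ℝ^n through z_0 such that (1) the distance of each z_j to ℓ is at most √n·ε, and (2) the pairwise distances between the orthogonal projections of the z_j onto ℓ are at least κ. -/

import Mathlib

open scoped RealInnerProductSpace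
noncomputable section

/-- Euclidean space ℝ^n. -/
abbrev En (n : ℕ) := EuclideanSpace ℝ (Fin n)

/-- Maximum of absolute values of all partial derivatives of order `l` of `f` at `z`. -/
def partialMax (n l : ℕ) (f : En n → ℝ) (z : En n) : ℝ :=
  ⨆ α : Fin l → Fin n,
    |iteratedFDeriv ℝ l f z (fun j => EuclideanSpace.single (α j) (1 : ℝ))|

/-- `M_l(f)`: sup over the closed unit ball of the max partial derivative of order `l`. -/
def Ml (n l : ℕ) (f : En n → ℝ) : ℝ :=
  ⨆ z : Metric.closedBall (0 : En n) 1, partialMax n l f (z : En n)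

/-- The class `U_d(Z)` of normalized `C^{d+1}` functions vanishing on `Z`. -/
def Ud (n d : ℕ) (Z : Set (En n)) : Set (En n → ℝ) :=
  {f | ContDiff ℝ (d + 1 : ℕ) f ∧ (∀ z ∈ Z, f z = 0) ∧ Ml n 0 f = 1}

/-- The `d`-rigidity `RG_d(Z)`. -/
def RG (n d : ℕ) (Z : Set (En n)) : ℝ :=
  sInf (Ml n (d + 1) '' Ud n d Z)

/-- `‖d^k ω(t)‖`: max over coordinates of the `k`-th derivative of the curve `ω` at `t`. -/
def curveDer (n k : ℕ) (ω : ℝ → En n) (t : ℝ) : ℝ :=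
  ⨆ i : Fin n, |iteratedDeriv k ω t i|

/-- `ν_d(ω,t)`: max over `2 ≤ k ≤ d+1` of `‖d^k ω(t)‖`. -/
def nuAt (n d : ℕ) (ω : ℝ → En n) (t : ℝ) : ℝ :=
  ⨆ k : {k : ℕ // 2 ≤ k ∧ k ≤ d + 1}, curveDer n (k : ℕ) ω t

/-- `ν_d(ω)`: max over `t ∈ [-1,1]` of `ν_d(ω,t)`. -/
def nuCurve (n d : ℕ) (ω : ℝ → En n) : ℝ :=
  ⨆ t : Set.Icc (-1 : ℝ) 1, nuAt n d ω (t : ℝ)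

/-- `M_k(ω)`: max over `t ∈ [-1,1]` of `‖d^k ω(t)‖`. -/
def Mkc (n k : ℕ) (ω : ℝ → En n) : ℝ :=
  ⨆ t : Set.Icc (-1 : ℝ) 1, curveDer n k ω (t : ℝ)

/-- Membership in the family `Ω_d(Z,z₀)` of admissible curves. -/
def InOmega (n d : ℕ) (Z : Set (En n)) (z₀ : En n) (ω : ℝ → En n) : Prop :=
  ContDiff ℝ (d + 1 : ℕ) ω ∧
  (∀ t ∈ Set.Icc (-1 : ℝ) 1, ω t ∈ Metric.closedBall (0 : En n) 1) ∧
  (∃ t ∈ Set.Icc (-1 : ℝ) 1, ω t = z₀) ∧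
  (∃ z : Fin (d + 1) → En n, Function.Injective z ∧
    ∀ j, z j ∈ Z ∧ ∃ t ∈ Set.Icc (-1 : ℝ) 1, ω t = z j) ∧
  (∀ t ∈ Set.Icc (-1 : ℝ) 1, 0 < curveDer n 1 ω t ∧ curveDer n 1 ω t ≤ 1) ∧
  nuCurve n d ω ≤ 1

/-- Pointwise `d`-thickness `ν_d(Z,z₀)`. -/
def nuZpt (n d : ℕ) (Z : Set (En n)) (z₀ : En n) : ℝ :=
  sInf (nuCurve n d '' {ω | InOmega n d Z z₀ ω})

/-- `d`-thickness `ν_d(Z)`. -/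
def nuZ (n d : ℕ) (Z : Set (En n)) : ℝ :=
  ⨆ z₀ : Metric.sphere (0 : En n) 1, nuZpt n d Z (z₀ : En n)

/-- Sup of `|P|` over a set `S`. -/
def polySup (n : ℕ) (P : MvPolynomial (Fin n) ℝ) (S : Set (En n)) : ℝ :=
  ⨆ x : S, |MvPolynomial.eval (fun i => (x : En n) i) P|

/-- The Remez constant `R_d(Z)` (value in `[1,∞]`). -/
def Remez (n d : ℕ) (Z : Set (En n)) : ENNReal :=
  sInf {K : ENNReal | 1 ≤ K ∧ ∀ P : MvPolynomial (Fin n) ℝ, P.totalDegree ≤ d →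
    ENNReal.ofReal (polySup n P (Metric.closedBall (0 : En n) 1)) ≤
      K * ENNReal.ofReal (polySup n P Z)}

/-- The inverse Remez constant `R̂_d(Z) = 1/R_d(Z)` (zero when `R_d(Z) = ∞`). -/
def invRemez (n d : ℕ) (Z : Set (En n)) : ℝ :=
  ((Remez n d Z)⁻¹).toReal

/-- The closed axis-parallel grid `ε`-cube with index `α`. -/
def gridCube (n : ℕ) (ε : ℝ) (α : Fin n → ℤ) : Set (En n) :=
  {x | ∀ i, (α i : ℝ) * ε ≤ x i ∧ x i ≤ ((α i : ℝ) + 1) * ε}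

/-- The covering number `M(ε,Z)`: the number of grid `ε`-cubes meeting `Z`. -/
def covNum (n : ℕ) (ε : ℝ) (Z : Set (En n)) : ℕ :=
  Set.ncard {α : Fin n → ℤ | (gridCube n ε α ∩ Z).Nonempty}

/-- Box (entropy) dimension of `Z`. -/
def dimE (n : ℕ) (Z : Set (En n)) : ℝ :=
  Filter.limsup (fun ε : ℝ => Real.log (covNum n ε Z) / Real.log (1 / ε))
    (nhdsWithin 0 (Set.Ioi 0))

/-- The straight line through `z₀` with direction `v`. -/
def lineThrough (n : ℕ) (z₀ v : En n) : Set (En n) :=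
  {x | ∃ t : ℝ, x = z₀ + t • v}

/-- Orthogonal projection of `p` onto the line through `z₀` with unit direction `v`. -/
def projLine (n : ℕ) (z₀ v p : En n) : En n :=
  z₀ + (inner ℝ (p - z₀) v : ℝ) • v

/-- Distance from `p` to the line through `z₀` with unit direction `v`. -/
def distLine (n : ℕ) (z₀ v p : En n) : ℝ :=
  dist p (projLine n z₀ v p)

/-- `ρ(ℓ,𝒵)`: max distance of the `d+1` points to the line. -/
def rhoLine (n d : ℕ) (z₀ v : En n) (z : Fin (d + 1) → En n) : ℝ :=
  ⨆ i, distLine n z₀ v (z i)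

/-- `κ(ℓ,𝒵)`: min distance between projections of the `d+1` points onto the line. -/
def kappaLine (n d : ℕ) (z₀ v : En n) (z : Fin (d + 1) → En n) : ℝ :=
  ⨅ p : {q : Fin (d + 1) × Fin (d + 1) // q.1 ≠ q.2},
    dist (projLine n z₀ v (z (p : Fin (d + 1) × Fin (d + 1)).1))
      (projLine n z₀ v (z (p : Fin (d + 1) × Fin (d + 1)).2))

/-- Pointwise approximate `ad`-thickness `ν̄_d(Z,z₀)`. -/
def barNuZpt (n d : ℕ) (Z : Set (En n)) (z₀ : En n) : ℝ :=
  sInf {m : ℝ | ∃ v : En n, ‖v‖ = 1 ∧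
    (lineThrough n z₀ v ∩ Metric.closedBall (0 : En n) (1 / 3)).Nonempty ∧
    ∃ z : Fin (d + 1) → En n, Function.Injective z ∧ (∀ i, z i ∈ Z) ∧
      m = rhoLine n d z₀ v z / (kappaLine n d z₀ v z) ^ d}

/-- Approximate `ad`-thickness `ν̄_d(Z)`. -/
def barNuZ (n d : ℕ) (Z : Set (En n)) : ℝ :=
  ⨆ z₀ : Metric.sphere (0 : En n) 1, barNuZpt n d Z (z₀ : En n)

/-- The axis-parallel cube with corner `a` and side `s`. -/
def cube (n : ℕ) (a : En n) (s : ℝ) : Set (En n) :=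
  {x | ∀ i, a i ≤ x i ∧ x i ≤ a i + s}

/-- `Z` is `h`-dense in the cube with corner `a` and side `s`. -/
def hDense (n : ℕ) (a : En n) (s h : ℝ) (Z : Set (En n)) : Prop :=
  ∀ b : En n, (∀ i, a i ≤ b i ∧ b i + h ≤ a i + s) → (Z ∩ cube n b h).Nonempty

/-- `μ_d(f,z)`: max over `1 ≤ k ≤ d` of the order-`k` partial derivatives of `f` at `z`. -/
def muF (n d : ℕ) (f : En n → ℝ) (z : En n) : ℝ :=
  ⨆ k : {k : ℕ // 1 ≤ k ∧ k ≤ d}, partialMax n (k : ℕ) f z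

/-- `μ_d(f)`: max over the unit ball of `μ_d(f,z)`. -/
def muFglob (n d : ℕ) (f : En n → ℝ) : ℝ :=
  ⨆ z : Metric.closedBall (0 : En n) 1, muF n d f (z : En n)

/-- `M_m(g)` for a function of one variable on `[-1,1]`. -/
def MIcc (m : ℕ) (g : ℝ → ℝ) : ℝ :=
  ⨆ t : Set.Icc (-1 : ℝ) 1, |iteratedDeriv m g (t : ℝ)|

end


/-!
Centrally project the point `p` chosen in each cube meeting `Z` from `z₀` onto the hyperplane
`z₀ᗮ`. As `‖p‖ ≤ 1/3`, the images lie in a ball of radius `3` of this `(n-1)`-dimensional space;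
cutting it into `O(1/ε)^(n-1)` cells of size `ε/2`, one cell receives `≳ (d+1) κ/ε` of the cubes,
and their points all lie within `√n ε` of the line through `z₀` and that cell. Along the line a
window of length `2κ` meets only `O(κ/ε)` of these cubes, since they are stacked along a tube of
width `O(√n ε)`, so choosing points greedily gives `d + 1` of them with `κ`-separated projections.
-/

open Finset Module

lemma EuclideanSpace.norm_le_sqrt_card_mul {ι : Type*} [Fintype ι] {x : EuclideanSpace ℝ ι}
    {c : ℝ} (hc : 0 ≤ c) (h : ∀ i, |x i| ≤ c) : ‖x‖ ≤ √(Fintype.card ι) * c := by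
  rw [EuclideanSpace.norm_eq, ← Real.sqrt_sq hc, ← Real.sqrt_mul (Nat.cast_nonneg _)]
  refine Real.sqrt_le_sqrt ?_
  calc ∑ i, ‖x i‖ ^ 2 ≤ ∑ _i : ι, c ^ 2 :=
        sum_le_sum fun i _ => pow_le_pow_left₀ (norm_nonneg _) (h i) 2
    _ = Fintype.card ι * c ^ 2 := by simp

lemma abs_sub_lt_of_floor_div_eq {x y δ : ℝ} (hδ : 0 < δ) (h : ⌊x / δ⌋ = ⌊y / δ⌋) :
    |x - y| < δ := by
  have := Int.abs_sub_lt_one_of_floor_eq_floor h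
  rwa [← sub_div, abs_div, abs_of_pos hδ, div_lt_one hδ] at this

section Line

variable {n : ℕ} {z₀ v : En n}

lemma dist_projLine (hv : ‖v‖ = 1) (p q : En n) :
    dist (projLine n z₀ v p) (projLine n z₀ v q) = |⟪p - z₀, v⟫ - ⟪q - z₀, v⟫| := by
  rw [projLine, projLine, dist_eq_norm, add_sub_add_left_eq_sub, ← sub_smul, norm_smul, hv,
    mul_one, Real.norm_eq_abs]

lemma distLine_le_norm_sub_smul (hv : ‖v‖ = 1) (p : En n) (t : ℝ) :
    distLine n z₀ v p ≤ ‖p - z₀ - t • v‖ := by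
  set c := ⟪p - z₀, v⟫
  have horth : ⟪p - z₀ - c • v, v⟫ = 0 := by
    rw [inner_sub_left, real_inner_smul_left, real_inner_self_eq_norm_sq, hv]; ring
  have hpyth : ‖p - z₀ - t • v‖ ^ 2 = ‖p - z₀ - c • v‖ ^ 2 + (c - t) ^ 2 := by
    rw [show p - z₀ - t • v = (p - z₀ - c • v) + (c - t) • v by rw [sub_smul]; abel,
      norm_add_sq_real, real_inner_smul_right, horth, norm_smul, hv, Real.norm_eq_abs, mul_one,
      sq_abs]
    ring
  have hdist : distLine n z₀ v p = ‖p - z₀ - c • v‖ := by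
    rw [distLine, projLine, dist_eq_norm, sub_add_eq_sub_sub]
  rw [hdist]
  exact (pow_le_pow_iff_left₀ (norm_nonneg _) (norm_nonneg _) two_ne_zero).1
    (by nlinarith [sq_nonneg (c - t)])

lemma distLine_le_of_sub_eq {w e p : En n} {a : ℝ} (hw : w ≠ 0) (h : p - z₀ = a • w + e) :
    distLine n z₀ (‖w‖⁻¹ • w) p ≤ ‖e‖ := by
  have hnorm : ‖w‖ ≠ 0 := norm_ne_zero_iff.2 hw
  have hunit : ‖‖w‖⁻¹ • w‖ = 1 := by rw [norm_smul, norm_inv, norm_norm, inv_mul_cancel₀ hnorm]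
  convert distLine_le_norm_sub_smul hunit p (a * ‖w‖) using 2
  rw [smul_smul, mul_assoc, mul_inv_cancel₀ hnorm, mul_one, h, add_sub_cancel_left]

lemma norm_sub_le_distLine_add (hv : ‖v‖ = 1) (p q : En n) :
    ‖p - q‖ ≤ distLine n z₀ v p + distLine n z₀ v q + |⟪p - z₀, v⟫ - ⟪q - z₀, v⟫| := by
  rw [← dist_eq_norm, ← dist_projLine hv, distLine, distLine, dist_comm q]
  linarith [dist_triangle4 p (projLine n z₀ v p) (projLine n z₀ v q) q]

end Line

section CentralProjection

variable {E : Type*} [NormedAddCommGroup E] [InnerProductSpace ℝ E] {z₀ p : E}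

-- The point where the line through `z₀` and `p` meets the hyperplane `z₀ᗮ`.
noncomputable def centralProj (z₀ p : E) : E := z₀ + (1 - ⟪p, z₀⟫)⁻¹ • (p - z₀)

lemma inner_centralProj_self (hz₀ : ‖z₀‖ = 1) (hp : ⟪p, z₀⟫ ≠ 1) :
    ⟪centralProj z₀ p, z₀⟫ = 0 := by
  have : 1 - ⟪p, z₀⟫ ≠ 0 := sub_ne_zero.2 hp.symm
  rw [centralProj, inner_add_left, real_inner_smul_left, inner_sub_left,
    real_inner_self_eq_norm_sq, hz₀]
  field_simp
  ring

lemma smul_centralProj_sub (hp : ⟪p, z₀⟫ ≠ 1) :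
    (1 - ⟪p, z₀⟫) • (centralProj z₀ p - z₀) = p - z₀ := by
  rw [centralProj, add_sub_cancel_left, smul_smul, mul_inv_cancel₀ (sub_ne_zero.2 hp.symm),
    one_smul]

lemma abs_inner_le_of_norm_le_one_third (hz₀ : ‖z₀‖ = 1) (hp : ‖p‖ ≤ 1 / 3) :
    |⟪p, z₀⟫| ≤ 1 / 3 :=
  (abs_real_inner_le_norm p z₀).trans (by rw [hz₀, mul_one]; exact hp)

lemma norm_centralProj_le (hz₀ : ‖z₀‖ = 1) (hp : ‖p‖ ≤ 1 / 3) : ‖centralProj z₀ p‖ ≤ 3 := by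
  have hinner := (abs_le.1 (abs_inner_le_of_norm_le_one_third hz₀ hp)).2
  have hsub : ‖p - z₀‖ ≤ 4 / 3 := (norm_sub_le p z₀).trans (by rw [hz₀]; linarith)
  have hinv : ‖(1 - ⟪p, z₀⟫)⁻¹‖ ≤ 3 / 2 := by
    rw [norm_inv, Real.norm_eq_abs, abs_of_pos (by linarith)]
    exact inv_le_of_inv_le₀ (by norm_num) (by linarith)
  calc ‖centralProj z₀ p‖ ≤ ‖z₀‖ + ‖(1 - ⟪p, z₀⟫)⁻¹‖ * ‖p - z₀‖ :=
        (norm_add_le _ _).trans_eq (by rw [norm_smul])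
    _ ≤ 1 + 3 / 2 * (4 / 3) := by
        rw [hz₀]; gcongr
    _ = 3 := by norm_num

end CentralProjection

lemma exists_large_subset_norm_sub_le {ι E : Type*} [NormedAddCommGroup E]
    [InnerProductSpace ℝ E] (K : Submodule ℝ E) [FiniteDimensional ℝ K] (A : Finset ι)
    (f : ι → E) {R δ b : ℝ} (hδ : 0 < δ) (hfK : ∀ i ∈ A, f i ∈ K) (hfR : ∀ i ∈ A, ‖f i‖ ≤ R)
    (hb : ((2 * ⌈R / δ⌉₊ + 1) ^ finrank ℝ K : ℕ) * b ≤ #A) :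
    ∃ B ⊆ A, b ≤ #B ∧ ∀ i ∈ B, ∀ j ∈ B, ‖f i - f j‖ ≤ √(finrank ℝ K) * δ := by
  classical
  set e := stdOrthonormalBasis ℝ K
  set L : ℤ := (⌈R / δ⌉₊ : ℤ)
  set T := Fintype.piFinset fun _ : Fin (finrank ℝ K) => Icc (-L) L
  set cell : ι → Fin (finrank ℝ K) → ℤ := fun i l => ⌊⟪(e l : E), f i⟫ / δ⌋
  have hmaps : ∀ i ∈ A, cell i ∈ T := by
    intro i hi
    simp only [T, Fintype.mem_piFinset, mem_Icc]
    intro l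
    have hR : |⟪(e l : E), f i⟫| ≤ R := by
      refine (abs_real_inner_le_norm _ _).trans ?_
      rw [show ‖(e l : E)‖ = 1 from e.orthonormal.1 l, one_mul]
      exact hfR i hi
    have hRL : R / δ ≤ L := by simpa [L] using Nat.le_ceil (R / δ)
    have hlo : -(L : ℝ) ≤ ⟪(e l : E), f i⟫ / δ := by
      rw [le_div_iff₀ hδ]; nlinarith [neg_abs_le ⟪(e l : E), f i⟫, (div_le_iff₀ hδ).1 hRL]
    have hhi : ⟪(e l : E), f i⟫ / δ ≤ L :=
      ((div_le_div_iff_of_pos_right hδ).2 ((le_abs_self _).trans hR)).trans hRL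
    exact ⟨Int.le_floor.2 (by exact_mod_cast hlo), Int.floor_le_iff.2 (by linarith)⟩
  have hT : #T = (2 * ⌈R / δ⌉₊ + 1) ^ finrank ℝ K := by
    simp only [T, Fintype.card_piFinset, Int.card_Icc, prod_const, card_univ, Fintype.card_fin]
    congr 1
    omega
  obtain ⟨c, -, hc⟩ := exists_le_card_fiber_of_nsmul_le_card_of_maps_to hmaps
    ⟨0, by simp [T, L]⟩ (show #T • b ≤ #A by rwa [hT, nsmul_eq_mul])
  refine ⟨{i ∈ A | cell i = c}, filter_subset _ _, hc, fun i hi j hj => ?_⟩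
  rw [mem_filter] at hi hj
  have hK : f i - f j ∈ K := K.sub_mem (hfK i hi.1) (hfK j hj.1)
  have hnorm : ‖f i - f j‖ = ‖e.repr ⟨f i - f j, hK⟩‖ := by
    rw [e.repr.norm_map, Submodule.coe_norm]
  rw [hnorm]
  refine (EuclideanSpace.norm_le_sqrt_card_mul hδ.le fun l => ?_).trans_eq (by simp)
  rw [e.repr_apply_apply, Submodule.coe_inner, Submodule.coe_mk, inner_sub_right]
  exact (abs_sub_lt_of_floor_div_eq hδ (congrFun (hi.2.trans hj.2.symm) l)).le

section Grid

variable {n : ℕ} {ε : ℝ}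

lemma le_of_mem_gridCube (hε : 0 < ε) {α β : Fin n → ℤ} {x y : En n}
    (hx : x ∈ gridCube n ε α) (hy : y ∈ gridCube n ε β) {N : ℕ} (hxy : ‖x - y‖ ≤ N * ε)
    (j : Fin n) : α j ≤ β j + N + 1 := by
  have hj : x j - y j ≤ ‖x - y‖ := (le_abs_self _).trans (PiLp.norm_apply_le (x - y) j)
  have : (α j : ℝ) * ε ≤ (β j + N + 1) * ε := by linarith [(hx j).1, (hy j).2]
  exact_mod_cast le_of_mul_le_mul_right this hε

lemma card_le_of_forall_norm_sub_le (hε : 0 < ε) (W : Finset (Fin n → ℤ))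
    (x : (Fin n → ℤ) → En n) (hx : ∀ α ∈ W, x α ∈ gridCube n ε α) (N : ℕ)
    (hW : ∀ α ∈ W, ∀ β ∈ W, ‖x α - x β‖ ≤ N * ε) : #W ≤ (2 * N + 3) ^ n := by
  obtain rfl | ⟨β, hβ⟩ := W.eq_empty_or_nonempty
  · simp
  have hsub : W ⊆ Fintype.piFinset fun j => Icc (β j - N - 1) (β j + N + 1) := by
    intro α hα
    simp only [Fintype.mem_piFinset, mem_Icc]
    intro j
    have h₁ := le_of_mem_gridCube hε (hx α hα) (hx β hβ) (hW α hα β hβ) j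
    have h₂ := le_of_mem_gridCube hε (hx β hβ) (hx α hα) (hW β hβ α hα) j
    omega
  have hcard : ∀ j, #(Icc (β j - N - 1) (β j + N + 1)) = 2 * N + 3 := fun j => by
    rw [Int.card_Icc]; omega
  simpa [Fintype.card_piFinset, hcard] using card_le_card hsub

lemma finite_setOf_gridCube_inter_nonempty (hε : 0 < ε) {Z : Set (En n)}
    (hZ : Bornology.IsBounded Z) : {α | (gridCube n ε α ∩ Z).Nonempty}.Finite := by
  obtain ⟨R, hR⟩ := isBounded_iff_forall_norm_le.1 hZ
  refine (Set.Finite.pi' fun _ => Set.finite_Icc ⌈-R / ε - 1⌉ ⌊R / ε⌋).subset ?_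
  rintro α ⟨x, hxα, hxZ⟩ j
  have hxj := abs_le.1 ((PiLp.norm_apply_le x j).trans (hR x hxZ))
  refine ⟨Int.ceil_le.2 ?_, Int.le_floor.2 ?_⟩
  · rw [div_sub_one hε.ne', div_le_iff₀ hε]; nlinarith [(hxα j).2]
  · rw [le_div_iff₀ hε]; linarith [(hxα j).1]

lemma card_window_le (hε : 0 < ε) {κ : ℝ} (hκ : 3 * ε ≤ κ) {z₀ v : En n} (hv : ‖v‖ = 1)
    (B : Finset (Fin n → ℤ)) (x : (Fin n → ℤ) → En n) (hx : ∀ α ∈ B, x α ∈ gridCube n ε α)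
    (hnear : ∀ α ∈ B, distLine n z₀ v (x α) ≤ √n * ε) (s : ℝ) :
    (#{α ∈ B | |⟪x α - z₀, v⟫ - s| < κ} : ℝ) ≤ (4 * n + 5) ^ n * (3 * κ / ε) := by
  set W := {α ∈ B | |⟪x α - z₀, v⟫ - s| < κ}
  set slice : (Fin n → ℤ) → ℤ := fun α => ⌊(⟪x α - z₀, v⟫ - s) / ε⌋
  set Q := ⌈κ / ε⌉₊
  have hWB : W ⊆ B := filter_subset _ _
  -- The points of one slice are within `(2√n + 1) ε` of each other.
  have hslice : ∀ q ∈ W.image slice, #{α ∈ W | slice α = q} ≤ (4 * n + 5) ^ n := by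
    intro q _
    have hsub : {α ∈ W | slice α = q} ⊆ B := (filter_subset _ _).trans hWB
    convert card_le_of_forall_norm_sub_le hε _ x (fun α hα => hx α (hsub hα)) (2 * n + 1)
      (fun α hα β hβ => ?_) using 2
    · ring
    rw [mem_filter] at hα hβ
    have hparam := abs_sub_lt_of_floor_div_eq hε (hα.2.trans hβ.2.symm)
    rw [sub_sub_sub_cancel_right] at hparam
    have hsqrt : √n ≤ n :=
      (Real.sqrt_le_left (Nat.cast_nonneg n)).2 (by exact_mod_cast Nat.le_self_pow two_ne_zero n)
    refine (norm_sub_le_distLine_add (z₀ := z₀) hv _ _).trans ?_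
    push_cast
    linarith [hnear α (hWB hα.1), hnear β (hWB hβ.1), mul_le_mul_of_nonneg_right hsqrt hε.le]
  have himage : W.image slice ⊆ Icc (-Q : ℤ) Q := by
    intro q hq
    obtain ⟨α, hα, rfl⟩ := mem_image.1 hq
    have hwin := abs_lt.1 (mem_filter.1 hα).2
    have hQ : κ / ε ≤ Q := Nat.le_ceil _
    rw [mem_Icc]
    constructor
    · refine Int.le_floor.2 ?_
      rw [le_div_iff₀ hε]
      push_cast
      nlinarith [(div_le_iff₀ hε).1 hQ]
    · refine Int.floor_le_iff.2 ?_
      rw [div_lt_iff₀ hε]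
      push_cast
      nlinarith [(div_le_iff₀ hε).1 hQ]
  have hQ : (Q : ℝ) < κ / ε + 1 := Nat.ceil_lt_add_one (div_nonneg (by linarith) hε.le)
  have hκε : 3 ≤ κ / ε := by rwa [le_div_iff₀ hε]
  have hcardQ : (#(Icc (-Q : ℤ) Q) : ℝ) = 2 * Q + 1 := by
    rw [Int.card_Icc]; norm_cast; omega
  calc (#W : ℝ) ≤ ((4 * n + 5) ^ n * #(W.image slice) : ℕ) := by
        exact_mod_cast card_le_mul_card_image W _ hslice
    _ ≤ (4 * n + 5) ^ n * (2 * Q + 1) := by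
        push_cast
        rw [← hcardQ]
        gcongr
    _ ≤ (4 * n + 5) ^ n * (3 * κ / ε) := by
        gcongr
        rw [mul_div_assoc]
        linarith

end Grid

lemma exists_separated_of_card_window_le {ι : Type*} (t : ι → ℝ) {κ K : ℝ} (hK : 0 < K) :
    ∀ (m : ℕ) (B : Finset ι), (∀ s, (#{i ∈ B | |t i - s| < κ} : ℝ) ≤ K) → m * K ≤ #B →
      ∃ f : Fin m → ι, (∀ i, f i ∈ B) ∧ ∀ i j, i ≠ j → κ ≤ |t (f i) - t (f j)| := by
  classical
  intro m
  induction m with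
  | zero => exact fun _ _ _ => ⟨Fin.elim0, fun i => i.elim0, fun i => i.elim0⟩
  | succ m ih =>
    intro B hwin hcard
    push_cast at hcard
    obtain ⟨a, ha⟩ : B.Nonempty := card_pos.1 (by exact_mod_cast (by nlinarith : (0 : ℝ) < #B))
    set B' := {i ∈ B | ¬|t i - t a| < κ}
    have hB' : m * K ≤ #B' := by
      have hsplit := card_filter_add_card_filter_not (s := B) (fun i => |t i - t a| < κ)
      have := hwin (t a)
      rw [← hsplit] at hcard
      push_cast at hcard
      linarith
    have hwin' : ∀ s, (#{i ∈ B' | |t i - s| < κ} : ℝ) ≤ K := fun s =>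
      le_trans (by exact_mod_cast card_le_card (filter_subset_filter _ (filter_subset _ _)))
        (hwin s)
    obtain ⟨f, hfB, hfsep⟩ := ih B' hwin' hB'
    have hfar : ∀ i, κ ≤ |t a - t (f i)| := fun i => by
      rw [abs_sub_comm]; exact not_lt.1 (mem_filter.1 (hfB i)).2
    refine ⟨Fin.cons a f, Fin.cases ha fun i => (mem_filter.1 (hfB i)).1, ?_⟩
    intro i j hij
    cases i using Fin.cases <;> cases j using Fin.cases
    · exact absurd rfl hij
    · simpa using hfar _
    · simpa [abs_sub_comm] using hfar _
    · simpa using hfsep _ _ (fun h => hij (by rw [h]))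

lemma exists_line_through_many_near {ι : Type*} {n : ℕ} {z₀ : En n} (hz₀ : ‖z₀‖ = 1)
    (A : Finset ι) (p : ι → En n) (hp : ∀ i ∈ A, ‖p i‖ ≤ 1 / 3) {ε b : ℝ} (hε : 0 < ε)
    (hε3 : ε ≤ 1 / 3) (hb : 0 < b) (hA : (13 / ε) ^ (n - 1) * b ≤ #A) :
    ∃ v : En n, ‖v‖ = 1 ∧ ∃ B ⊆ A, b ≤ #B ∧ ∀ i ∈ B, distLine n z₀ v (p i) ≤ √n * ε := by
  set K := (ℝ ∙ z₀)ᗮ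
  set q := fun i => centralProj z₀ (p i)
  have hrank : finrank ℝ K = n - 1 := by
    have := (ℝ ∙ z₀).finrank_add_finrank_orthogonal
    rw [finrank_span_singleton (norm_ne_zero_iff.1 (by rw [hz₀]; exact one_ne_zero)),
      finrank_euclideanSpace_fin] at this
    change 1 + finrank ℝ K = n at this
    omega
  have hinner : ∀ i ∈ A, |⟪p i, z₀⟫| ≤ 1 / 3 := fun i hi =>
    abs_inner_le_of_norm_le_one_third hz₀ (hp i hi)
  have hne : ∀ i ∈ A, ⟪p i, z₀⟫ ≠ 1 := fun i hi =>
    ((abs_le.1 (hinner i hi)).2.trans_lt (by norm_num)).ne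
  have hcells : 2 * (⌈3 / (ε / 2)⌉₊ : ℝ) + 1 ≤ 13 / ε := by
    have hceil := (Nat.ceil_lt_add_one (by positivity : 0 ≤ 3 / (ε / 2))).le
    have h13 : 3 ≤ 1 / ε := by rw [le_div_iff₀ hε]; linarith
    rw [div_div_eq_mul_div] at hceil
    linarith [show 3 * 2 / ε = 6 * (1 / ε) by ring, show 13 / ε = 13 * (1 / ε) by ring]
  obtain ⟨B, hBA, hbB, hclose⟩ := exists_large_subset_norm_sub_le K A q (half_pos hε)
    (fun i hi => Submodule.mem_orthogonal_singleton_iff_inner_left.2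
      (inner_centralProj_self hz₀ (hne i hi)))
    (fun i hi => norm_centralProj_le hz₀ (hp i hi))
    (le_trans (by rw [hrank]; push_cast; gcongr) hA)
  obtain ⟨a, ha⟩ : B.Nonempty := card_pos.1 (by exact_mod_cast hb.trans_le hbB)
  have hw : q a - z₀ ≠ 0 := by
    intro h
    have : ⟪q a, z₀⟫ = 0 := inner_centralProj_self hz₀ (hne a (hBA ha))
    rw [sub_eq_zero.1 h, real_inner_self_eq_norm_sq, hz₀] at this
    norm_num at this
  refine ⟨‖q a - z₀‖⁻¹ • (q a - z₀), by rw [norm_smul, norm_inv, norm_norm,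
    inv_mul_cancel₀ (norm_ne_zero_iff.2 hw)], B, hBA, hbB, fun i hi => ?_⟩
  set c := 1 - ⟪p i, z₀⟫
  -- `p i` lies on the line through `z₀` and `q i`, which is close to the one through `q a`.
  have hdecomp : p i - z₀ = c • (q a - z₀) + c • (q i - q a) := by
    rw [← smul_add, sub_add_sub_cancel', smul_centralProj_sub (hne i (hBA hi))]
  refine (distLine_le_of_sub_eq hw hdecomp).trans ?_
  have hc : ‖c‖ ≤ 4 / 3 := by
    rw [Real.norm_eq_abs, abs_le]; constructor <;> linarith [abs_le.1 (hinner i (hBA hi))]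
  have hsqrt : √(finrank ℝ K : ℝ) ≤ √n :=
    Real.sqrt_le_sqrt (by rw [hrank]; exact_mod_cast n.sub_le 1)
  calc ‖c • (q i - q a)‖ = ‖c‖ * ‖q i - q a‖ := norm_smul _ _
    _ ≤ 4 / 3 * (√n * (ε / 2)) := by
        gcongr
        exact (hclose i hi a ha).trans (by gcongr)
    _ ≤ √n * ε := by nlinarith [Real.sqrt_nonneg n]

theorem stmt17_general (n d : ℕ) (hn : 2 ≤ n) :
    ∃ ξ₁ : ℝ, 0 < ξ₁ ∧
      ∀ Z : Set (En n), Z ⊆ Metric.closedBall (0 : En n) (1 / 3) →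
        ∀ z₀ ∈ Metric.sphere (0 : En n) 1,
          ∀ ε κ : ℝ, 0 < ε → 0 < κ → ε ≤ 1 / (10 * Real.sqrt n) →
            κ > 10 * Real.sqrt n * ε →
            ξ₁ * κ * (1 / ε) ^ n ≤ (covNum n ε Z : ℝ) →
            ∃ z : Fin (d + 1) → En n, Function.Injective z ∧ (∀ j, z j ∈ Z) ∧
              ∃ v : En n, ‖v‖ = 1 ∧
                (∀ j, distLine n z₀ v (z j) ≤ Real.sqrt n * ε) ∧
                (∀ i j, i ≠ j →
                  κ ≤ dist (projLine n z₀ v (z i)) (projLine n z₀ v (z j))) := by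
  refine ⟨3 * (d + 1) * (4 * n + 5) ^ n * 13 ^ (n - 1), by positivity, ?_⟩
  intro Z hZ z₀ hz₀ ε κ hε hκ hεle hκgt hcov
  have hsqrt : 1 ≤ √(n : ℝ) := Real.one_le_sqrt.2 (by exact_mod_cast (by omega : 1 ≤ n))
  have hε3 : ε ≤ 1 / 3 := hεle.trans (by gcongr; nlinarith)
  have hκε : 3 * ε ≤ κ := by nlinarith
  have hfin := finite_setOf_gridCube_inter_nonempty hε (Metric.isBounded_closedBall.subset hZ)
  set A := hfin.toFinset
  choose! x hxcube hxZ using fun α (hα : α ∈ A) => by simpa [A] using hα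
  set window := (4 * n + 5 : ℝ) ^ n * (3 * κ / ε)
  have hA : (13 / ε) ^ (n - 1) * ((d + 1 : ℕ) * window) ≤ #A := by
    have hpow : (1 / ε) ^ n = (1 / ε) ^ (n - 1) * (1 / ε) := by
      rw [← pow_succ, Nat.sub_add_cancel (by omega)]
    calc _ = 3 * (d + 1) * (4 * n + 5) ^ n * 13 ^ (n - 1) * κ * (1 / ε) ^ n := by
          rw [hpow, div_eq_mul_one_div 13 ε, mul_pow]; push_cast; ring
      _ ≤ #A := by rw [← Set.ncard_eq_toFinset_card _ hfin]; exact_mod_cast hcov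
  obtain ⟨v, hv, B, hBA, hBcard, hBnear⟩ := exists_line_through_many_near
    (mem_sphere_zero_iff_norm.1 hz₀) A x (fun α hα => by simpa using hZ (hxZ α hα)) hε hε3
    (by positivity) hA
  obtain ⟨f, hfB, hfsep⟩ := exists_separated_of_card_window_le (fun α => ⟪x α - z₀, v⟫)
    (by positivity) (d + 1) B
    (card_window_le hε hκε hv B x (fun α hα => hxcube α (hBA hα)) hBnear) hBcard
  refine ⟨x ∘ f, fun i j hij => ?_, fun j => hxZ _ (hBA (hfB j)), v, hv,
    fun j => hBnear _ (hfB j), fun i j hij => (dist_projLine hv _ _).trans_ge (hfsep i j hij)⟩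
  by_contra hne
  have := hfsep i j hne
  simp only [Function.comp_apply] at hij
  rw [hij, sub_self, abs_zero] at this
  linarith

/-- there is `ξ₁(n,d) > 0` such that for `Z ⊆ B̂^n`, `z₀ ∈ S^{n-1}`,
`ε ≤ 1/(10√n)` and `κ > 10√n·ε`, if `M(ε,Z) ≥ ξ₁·κ·(1/ε)^n` then there are `d+1` distinct
points of `Z` and a line `ℓ` through `z₀` with each point within `√n·ε` of `ℓ` and the
projections onto `ℓ` pairwise `κ`-separated. -/
theorem stmt17 (n d : ℕ) (hn : 2 ≤ n) (hd : 1 ≤ d) :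
    ∃ ξ₁ : ℝ, 0 < ξ₁ ∧
      ∀ Z : Set (En n), Z ⊆ Metric.closedBall (0 : En n) (1 / 3) →
        ∀ z₀ ∈ Metric.sphere (0 : En n) 1,
          ∀ ε κ : ℝ, 0 < ε → 0 < κ → ε ≤ 1 / (10 * Real.sqrt n) →
            κ > 10 * Real.sqrt n * ε →
            ξ₁ * κ * (1 / ε) ^ n ≤ (covNum n ε Z : ℝ) →
            ∃ z : Fin (d + 1) → En n, Function.Injective z ∧ (∀ j, z j ∈ Z) ∧
              ∃ v : En n, ‖v‖ = 1 ∧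
                (∀ j, distLine n z₀ v (z j) ≤ Real.sqrt n * ε) ∧
                (∀ i j, i ≠ j →
                  κ ≤ dist (projLine n z₀ v (z i)) (projLine n z₀ v (z j))) :=
  stmt17_general n d hn
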